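/- arXiv:2207.04151 — 2 statements merged into one kernel-verified Lean document; each statement's English description precedes it below -/
import Mathlib

section
/- If $w \in H^1(\mathbb{R})$, then for every $x \in \mathbb{R}$, $\| 2ik\int_{-\infty}^x e^{2ik(x-y)} w(y)\,dy + w(x) \|_{L^2_k(\mathbb{R})} \le \sqrt{\pi}\, \|w'\|_{L^2(\mathbb{R})}$, uniformly in $x$. -/
set_option maxHeartbeats 1000000

open MeasureTheory Complex Set Real Filter
open scoped ENNReal

lemma re_aux (c k y : ℝ) : (2 * Complex.I * (k:ℂ) * ((c:ℂ) - (y:ℂ))).re = 0 := by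
  simp [Complex.mul_re, Complex.mul_im]

lemma re_aux3 (k c : ℝ) : (2 * Complex.I * (k:ℂ) * (c:ℂ)).re = 0 := by
  simp [Complex.mul_re, Complex.mul_im]

lemma norm_exp_im (z : ℂ) (hz : z.re = 0) : ‖Complex.exp z‖ = 1 := by
  rw [Complex.norm_exp, hz, Real.exp_zero]

lemma re_aux2 (k y : ℝ) : (-(2 * Complex.I * (k:ℂ) * (y:ℂ))).re = 0 := by
  simp [Complex.mul_re, Complex.mul_im]

lemma continuous_setIntegral_exp_mul (s : Set ℝ) {f : ℝ → ℂ} (hf : IntegrableOn f s volume)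
    (e : ℝ → ℝ → ℂ) (he_cont : ∀ y, Continuous fun k => e k y)
    (he_meas : ∀ k, AEStronglyMeasurable (fun y => e k y) (volume.restrict s))
    (he_bd : ∀ k y, ‖e k y‖ ≤ 1) :
    Continuous fun k => ∫ y in s, e k y * f y := by
  apply continuous_of_dominated (bound := fun y => ‖f y‖)
  · exact fun k => (he_meas k).mul hf.1
  · intro k
    filter_upwards with y
    rw [norm_mul]
    calc ‖e k y‖ * ‖f y‖ ≤ 1 * ‖f y‖ :=
          mul_le_mul_of_nonneg_right (he_bd k y) (norm_nonneg _)
      _ = ‖f y‖ := one_mul _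
  · exact hf.norm
  · filter_upwards with y using (he_cont y).mul continuous_const

lemma parseval_interval (a T : ℝ) (hT : 0 < T) (f : ℝ → ℂ) (hfm : Measurable f)
    (hf2 : MemLp f 2 (volume.restrict (Ioc a (a + T)))) (k : ℝ) :
    HasSum (fun n : ℤ =>
        ‖∫ y in Ioc a (a + T),
            Complex.exp (-(2 * Complex.I * ((k + Real.pi * n / T : ℝ) : ℂ) * (y:ℂ))) * f y‖ ^ 2)
      (T * ∫ y in Ioc a (a + T), ‖f y‖ ^ 2) := by
  haveI : Fact (0 < T) := ⟨hT⟩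
  set fk : ℝ → ℂ := fun y => Complex.exp (-(2 * Complex.I * (k:ℂ) * (y:ℂ))) * f y with hfk
  have hcont : Continuous fun y : ℝ => Complex.exp (-(2 * Complex.I * (k:ℂ) * (y:ℂ))) := by
    fun_prop
  have hfkm : Measurable fk := hcont.measurable.mul hfm
  have hnorm : ∀ y, ‖fk y‖ = ‖f y‖ := by
    intro y
    rw [hfk, norm_mul, norm_exp_im _ (re_aux2 k y), one_mul]
  have hfk2 : MemLp fk 2 (volume.restrict (Ioc a (a + T))) :=
    hf2.of_le hfkm.aestronglyMeasurable (ae_of_all _ fun y => (hnorm y).le)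
  set φ : AddCircle T → ℂ := AddCircle.liftIoc T a fk with hφ
  have hφm : Measurable φ :=
    (hfkm.comp measurable_subtype_coe).comp (AddCircle.measurableEquivIoc T a).measurable
  have hφmk : (fun y : ℝ => φ ↑y) =ᵐ[volume.restrict (Ioc a (a + T))] fk := by
    filter_upwards [ae_restrict_mem measurableSet_Ioc] with y hy
    exact AddCircle.liftIoc_coe_apply hy
  have h1 : eLpNorm φ 2 (volume : Measure (AddCircle T)) =
      eLpNorm fk 2 (volume.restrict (Ioc a (a + T))) := by
    rw [← eLpNorm_comp_measurePreserving hφm.aestronglyMeasurable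
      (AddCircle.measurePreserving_mk T a)]
    exact eLpNorm_congr_ae hφmk
  have hφ2v : MemLp φ 2 (volume : Measure (AddCircle T)) :=
    ⟨hφm.aestronglyMeasurable, by rw [h1]; exact hfk2.2⟩
  have hhaar : (AddCircle.haarAddCircle : Measure (AddCircle T)) =
      (ENNReal.ofReal T)⁻¹ • (volume : Measure (AddCircle T)) := by
    rw [AddCircle.volume_eq_smul_haarAddCircle, smul_smul, ENNReal.inv_mul_cancel, one_smul]
    · exact (ENNReal.ofReal_pos.2 hT).ne'
    · exact ENNReal.ofReal_ne_top
  have hφ2 : MemLp φ 2 (AddCircle.haarAddCircle) := by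
    refine hφ2v.of_measure_le_smul (c := (ENNReal.ofReal T)⁻¹) ?_ (le_of_eq hhaar)
    exact ENNReal.inv_ne_top.2 (ENNReal.ofReal_pos.2 hT).ne'
  set Φ := hφ2.toLp φ with hΦ
  have hpars := tsum_sq_fourierCoeff Φ
  -- coefficients
  set F : ℝ → ℂ := fun κ =>
    ∫ y in Ioc a (a + T), Complex.exp (-(2 * Complex.I * (κ:ℂ) * (y:ℂ))) * f y with hF
  have hcoeff : ∀ n : ℤ, fourierCoeff (Φ : AddCircle T → ℂ) n
      = (1 / T : ℂ) * F (k + Real.pi * n / T) := by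
    intro n
    have e1 : fourierCoeff (Φ : AddCircle T → ℂ) n = fourierCoeff φ n := by
      unfold fourierCoeff
      refine integral_congr_ae ?_
      filter_upwards [hφ2.coeFn_toLp] with z hz
      rw [hz]
    have e2 : fourierCoeff φ n = fourierCoeffOn (lt_add_of_pos_right a hT) fk n :=
      fourierCoeff_liftIoc_eq fk n
    rw [e1, e2, fourierCoeffOn_eq_integral]
    rw [intervalIntegral.integral_of_le (by linarith : a ≤ a + T)]
    have : ∫ y in Ioc a (a + T), fourier (-n) (y : AddCircle (a + T - a)) • fk y
        = F (k + Real.pi * n / T) := by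
      refine setIntegral_congr_fun measurableSet_Ioc fun y _ => ?_
      rw [fourier_coe_apply, smul_eq_mul, hfk, ← mul_assoc, ← Complex.exp_add]
      congr 2
      have hT' : (T : ℂ) ≠ 0 := by exact_mod_cast hT.ne'
      push_cast
      rw [add_sub_cancel_left]
      field_simp
      ring
    rw [this, add_sub_cancel_left]
    simp [smul_eq_mul]
  -- right-hand side
  have hRHS : (∫ t : AddCircle T, ‖(Φ : AddCircle T → ℂ) t‖ ^ 2 ∂AddCircle.haarAddCircle)
      = (1 / T) * ∫ y in Ioc a (a + T), ‖f y‖ ^ 2 := by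
    have e1 : (∫ t : AddCircle T, ‖(Φ : AddCircle T → ℂ) t‖ ^ 2 ∂AddCircle.haarAddCircle)
        = ∫ t : AddCircle T, ‖φ t‖ ^ 2 ∂AddCircle.haarAddCircle := by
      refine integral_congr_ae ?_
      filter_upwards [hφ2.coeFn_toLp] with z hz
      rw [hz]
    have e2 : (∫ t : AddCircle T, ‖φ t‖ ^ 2 ∂(volume : Measure (AddCircle T)))
        = T * ∫ t : AddCircle T, ‖φ t‖ ^ 2 ∂AddCircle.haarAddCircle := by
      rw [AddCircle.volume_eq_smul_haarAddCircle, integral_smul_measure,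
        ENNReal.toReal_ofReal hT.le, smul_eq_mul]
    have e3 : (∫ y in Ioc a (a + T), ‖φ ↑y‖ ^ 2) =
        ∫ t : AddCircle T, ‖φ t‖ ^ 2 ∂(volume : Measure (AddCircle T)) :=
      AddCircle.integral_preimage T a (fun z => ‖φ z‖ ^ 2)
    have e4 : (∫ y in Ioc a (a + T), ‖φ ↑y‖ ^ 2) = ∫ y in Ioc a (a + T), ‖f y‖ ^ 2 := by
      refine setIntegral_congr_fun measurableSet_Ioc fun y hy => ?_
      rw [hφ, AddCircle.liftIoc_coe_apply hy, hnorm]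
    rw [e1]
    rw [← e4, e3, e2]
    field_simp
  -- summability
  have hSummable : Summable fun n : ℤ => ‖fourierCoeff (Φ : AddCircle T → ℂ) n‖ ^ 2 := by
    have hm := lp.memℓp (fourierBasis.repr Φ)
    rw [memℓp_gen_iff (p := (2:ℝ≥0∞)) (by norm_num)] at hm
    have heq : ∀ n : ℤ, ‖(fourierBasis.repr Φ) n‖ ^ (2:ℝ≥0∞).toReal
        = ‖fourierCoeff (Φ : AddCircle T → ℂ) n‖ ^ 2 := by
      intro n
      rw [fourierBasis_repr,
        show ((2:ℝ≥0∞)).toReal = ((2:ℕ):ℝ) by simp, Real.rpow_natCast]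
    exact (summable_congr heq).1 hm
  have hTne : (T:ℝ) ≠ 0 := hT.ne'
  have hnormc : ∀ n : ℤ, ‖F (k + Real.pi * n / T)‖ ^ 2
      = T ^ 2 * ‖fourierCoeff (Φ : AddCircle T → ℂ) n‖ ^ 2 := by
    intro n
    rw [hcoeff n, norm_mul]
    have : ‖(1 / T : ℂ)‖ = 1 / T := by
      rw [show (1 / T : ℂ) = ((1/T : ℝ) : ℂ) by push_cast; ring, Complex.norm_real,
        Real.norm_eq_abs, abs_of_pos (by positivity)]
    rw [this]
    field_simp
  have hs2 : Summable fun n : ℤ => ‖F (k + Real.pi * n / T)‖ ^ 2 := by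
    refine (summable_congr fun n => (hnormc n)).2 (hSummable.mul_left _)
  rw [hs2.hasSum_iff]
  calc ∑' n : ℤ, ‖F (k + Real.pi * n / T)‖ ^ 2
      = ∑' n : ℤ, T ^ 2 * ‖fourierCoeff (Φ : AddCircle T → ℂ) n‖ ^ 2 := by
        exact tsum_congr hnormc
    _ = T ^ 2 * ∑' n : ℤ, ‖fourierCoeff (Φ : AddCircle T → ℂ) n‖ ^ 2 := tsum_mul_left
    _ = T ^ 2 * ((1 / T) * ∫ y in Ioc a (a + T), ‖f y‖ ^ 2) := by rw [hpars, hRHS]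
    _ = T * ∫ y in Ioc a (a + T), ‖f y‖ ^ 2 := by field_simp

lemma lintegral_sq_fourier (a T : ℝ) (hT : 0 < T) (f : ℝ → ℂ) (hfm : Measurable f)
    (hf2 : MemLp f 2 (volume.restrict (Ioc a (a + T)))) :
    (∫⁻ k : ℝ, (‖∫ y in Ioc a (a + T),
        Complex.exp (-(2 * Complex.I * (k:ℂ) * (y:ℂ))) * f y‖₊ : ℝ≥0∞) ^ 2)
      = ENNReal.ofReal (Real.pi * ∫ y in Ioc a (a + T), ‖f y‖ ^ 2) := by
  haveI : IsFiniteMeasure (volume.restrict (Ioc a (a + T))) :=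
    ⟨by rw [Measure.restrict_apply_univ]; exact measure_Ioc_lt_top⟩
  have hf_int : IntegrableOn f (Ioc a (a + T)) volume := hf2.integrable (by norm_num)
  set F : ℝ → ℂ := fun κ => ∫ y in Ioc a (a + T),
      Complex.exp (-(2 * Complex.I * (κ:ℂ) * (y:ℂ))) * f y with hF
  have hFc : Continuous F := by
    refine continuous_setIntegral_exp_mul _ hf_int
      (fun k y => Complex.exp (-(2 * Complex.I * (k:ℂ) * (y:ℂ)))) (fun y => by fun_prop)
      (fun k => (Continuous.aestronglyMeasurable (by fun_prop))) (fun k y => ?_)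
    rw [norm_exp_im _ (re_aux2 k y)]
  set g : ℝ → ℝ≥0∞ := fun k => (‖F k‖₊ : ℝ≥0∞) ^ 2 with hg
  have hmeas : Measurable g :=
    (measurable_coe_nnreal_ennreal.comp hFc.nnnorm.measurable).pow_const 2
  set L : ℝ := Real.pi / T with hL0
  have hL : 0 < L := div_pos Real.pi_pos hT
  set B : ℝ := ∫ y in Ioc a (a + T), ‖f y‖ ^ 2 with hB0
  have hB : 0 ≤ B := setIntegral_nonneg measurableSet_Ioc fun y _ => by positivity
  have hsum : ∀ k : ℝ, (∑' n : ℤ, g (k + n • L)) = ENNReal.ofReal (T * B) := by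
    intro k
    have hps := parseval_interval a T hT f hfm hf2 k
    have h1 : ∀ n : ℤ, g (k + n • L)
        = ENNReal.ofReal (‖F (k + Real.pi * n / T)‖ ^ 2) := by
      intro n
      rw [show k + n • L = k + Real.pi * n / T by rw [zsmul_eq_mul, hL0]; ring]
      rw [hg, ENNReal.ofReal_pow (norm_nonneg _), ofReal_norm, enorm_eq_nnnorm]
    rw [tsum_congr h1, ← ENNReal.ofReal_tsum_of_nonneg (fun n => by positivity) hps.summable,
      hps.tsum_eq]
  have hdis : Pairwise (Function.onFun Disjoint fun n : ℤ => Ioc (n • L) ((n + 1) • L)) := by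
    intro m n hmn
    simp only [Function.onFun]
    rw [Set.Ioc_disjoint_Ioc]
    have key : ∀ p q : ℤ, p < q → (p + 1) • L ≤ q • L := by
      intro p q hpq
      rw [zsmul_eq_mul, zsmul_eq_mul]
      exact mul_le_mul_of_nonneg_right (by exact_mod_cast hpq) hL.le
    rcases hmn.lt_or_gt with h | h
    · exact le_trans (min_le_left _ _) (le_trans (key m n h) (le_max_right _ _))
    · exact le_trans (min_le_right _ _) (le_trans (key n m h) (le_max_left _ _))
  have htrans : ∀ n : ℤ, (∫⁻ k in Ioc (n • L) ((n + 1) • L), g k)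
      = ∫⁻ k in Ioc 0 L, g (k + n • L) := by
    intro n
    have hmp : MeasurePreserving (fun k : ℝ => k + n • L) volume volume :=
      measurePreserving_add_right volume (n • L)
    have hemb : MeasurableEmbedding (fun k : ℝ => k + n • L) :=
      (Homeomorph.addRight ((n • L : ℝ))).measurableEmbedding
    have h := hmp.setLIntegral_comp_preimage_emb hemb g (Ioc (n • L) ((n + 1) • L))
    rw [preimage_add_const_Ioc, sub_self,
      show ((n + 1) • L - n • L : ℝ) = L by rw [add_zsmul, one_zsmul]; ring] at h
    exact h.symm
  calc (∫⁻ k : ℝ, g k) = ∫⁻ k in univ, g k := (setLIntegral_univ g).symm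
    _ = ∫⁻ k in ⋃ n : ℤ, Ioc (n • L) ((n + 1) • L), g k := by
        rw [iUnion_Ioc_zsmul hL]
    _ = ∑' n : ℤ, ∫⁻ k in Ioc (n • L) ((n + 1) • L), g k :=
        lintegral_iUnion (fun n => measurableSet_Ioc) hdis g
    _ = ∑' n : ℤ, ∫⁻ k in Ioc 0 L, g (k + n • L) := by
        exact tsum_congr htrans
    _ = ∫⁻ k in Ioc 0 L, ∑' n : ℤ, g (k + n • L) := by
        refine (lintegral_tsum fun n => ?_).symm
        exact (hmeas.comp (measurable_add_const _)).aemeasurable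
    _ = ∫⁻ _ in Ioc 0 L, ENNReal.ofReal (T * B) := by
        exact lintegral_congr fun k => hsum k
    _ = ENNReal.ofReal (T * B) * ENNReal.ofReal L := by
        rw [setLIntegral_const, Real.volume_Ioc, sub_zero]
    _ = ENNReal.ofReal (Real.pi * B) := by
        rw [← ENNReal.ofReal_mul (by positivity)]
        congr 1
        rw [hL0]
        field_simp

/-- If `w ∈ H¹(ℝ)`, then for every `x`,
`‖2ik ∫_{-∞}^x e^{2ik(x-y)} w(y) dy + w(x)‖_{L²_k} ≤ √π ‖w'‖_{L²}`. -/
theorem stmt1 (w w' : ℝ → ℂ) (hw : MemLp w 2 (volume : Measure ℝ))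
    (hderiv : ∀ t : ℝ, HasDerivAt w (w' t) t)
    (hw' : MemLp w' 2 (volume : Measure ℝ)) (x : ℝ) :
    Real.sqrt (∫ k : ℝ,
        ‖2 * Complex.I * k *
            (∫ y in Set.Iic x, Complex.exp (2 * Complex.I * k * (x - y)) * w y) + w x‖ ^ 2) ≤
      Real.sqrt Real.pi * Real.sqrt (∫ y : ℝ, ‖w' y‖ ^ 2) := by
  have hRHSnn : 0 ≤ Real.sqrt Real.pi * Real.sqrt (∫ y : ℝ, ‖w' y‖ ^ 2) :=
    mul_nonneg (Real.sqrt_nonneg _) (Real.sqrt_nonneg _)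
  by_cases hInt : IntegrableOn w (Iic x) volume
  swap
  · -- non-integrable case : inner integrals are all zero
    have hAzero : ∀ k : ℝ,
        (∫ y in Set.Iic x, Complex.exp (2 * Complex.I * k * (x - y)) * w y) = 0 := by
      intro k
      refine integral_undef fun hc => hInt ?_
      have h2 : Integrable (fun y : ℝ => Complex.exp (-(2 * Complex.I * k * ((x:ℂ) - (y:ℂ)))) *
          (Complex.exp (2 * Complex.I * k * ((x:ℂ) - (y:ℂ))) * w y)) (volume.restrict (Iic x)) := by
        refine hc.bdd_mul (c := 1) (Continuous.aestronglyMeasurable (by fun_prop)) (ae_of_all _ fun y => ?_)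
        refine le_of_eq (norm_exp_im _ ?_)
        rw [Complex.neg_re, re_aux x k y, neg_zero]
      refine h2.congr (ae_of_all _ fun y => ?_)
      simp only [← mul_assoc, ← Complex.exp_add, neg_add_cancel, Complex.exp_zero, one_mul]
    have hconst : (∫ k : ℝ,
        ‖2 * Complex.I * k *
            (∫ y in Set.Iic x, Complex.exp (2 * Complex.I * k * (x - y)) * w y) + w x‖ ^ 2)
        = ∫ _k : ℝ, ‖w x‖ ^ 2 := by
      refine integral_congr_ae (ae_of_all _ fun k => ?_)
      simp only [hAzero k, mul_zero, zero_add]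
    rw [hconst]
    by_cases hwx : w x = 0
    · have hz : (∫ _k : ℝ, ‖w x‖ ^ 2) = 0 := by rw [hwx]; simp
      rw [hz, Real.sqrt_zero]
      exact hRHSnn
    · have hni : ¬ Integrable (fun _k : ℝ => ‖w x‖ ^ 2) volume := by
        rw [integrable_const_iff]
        push_neg
        refine ⟨pow_ne_zero 2 (norm_ne_zero_iff.2 hwx), ?_⟩
        intro h; have := measure_lt_top (volume : Measure ℝ) univ; simp [Real.volume_univ] at this
      rw [integral_undef hni, Real.sqrt_zero]
      exact hRHSnn
  · -- main case
    have hwc : Continuous w := continuous_iff_continuousAt.2 fun t => (hderiv t).continuousAt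
    have hw'm : Measurable w' := by
      have hD : w' = deriv w := funext fun t => ((hderiv t).deriv).symm
      rw [hD]; exact measurable_deriv w
    have hwsq : Integrable (fun y => ‖w y‖ ^ 2) volume := (memLp_two_iff_integrable_sq_norm hw.1).1 hw
    have hw'sq : Integrable (fun y => ‖w' y‖ ^ 2) volume :=
      (memLp_two_iff_integrable_sq_norm hw'.1).1 hw'
    set B : ℝ := ∫ y : ℝ, ‖w' y‖ ^ 2 with hB0
    have hBnn : 0 ≤ B := integral_nonneg fun y => by positivity
    -- choose the escaping sequence
    have hchoice : ∀ n : ℕ, ∃ s : ℝ, s ≤ min (-(n:ℝ)) (x - 1) ∧ ‖w s‖ < 1 / (n + 1) := by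
      intro n
      by_contra hcon
      push_neg at hcon
      have hfin := hwsq.measure_ge_lt_top (ε := (1 / ((n:ℝ) + 1)) ^ 2) (by positivity)
      have hsub : Iic (min (-(n:ℝ)) (x - 1)) ⊆ {y : ℝ | (1 / ((n:ℝ)+1)) ^ 2 ≤ ‖w y‖ ^ 2} := by
        intro s hs
        exact pow_le_pow_left₀ (by positivity) (hcon s hs) 2
      have := (measure_mono hsub).trans_lt hfin
      rw [Real.volume_Iic] at this
      exact (lt_irrefl _ this).elim
    choose t ht1 ht2 using hchoice
    have hax : ∀ n, t n < x := fun n =>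
      lt_of_le_of_lt ((ht1 n).trans (min_le_right _ _)) (by linarith)
    -- integrability facts
    have hIntExp : ∀ k : ℝ, IntegrableOn
        (fun y : ℝ => Complex.exp (2 * Complex.I * k * ((x:ℂ) - (y:ℂ))) * w y) (Iic x) volume := by
      intro k
      refine hInt.bdd_mul (c := 1) (Continuous.aestronglyMeasurable (by fun_prop)) (ae_of_all _ fun y => ?_)
      exact le_of_eq (norm_exp_im _ (re_aux x k y))
    have hw'Ioc : ∀ n, IntegrableOn w' (Ioc (t n) x) volume := by
      intro n
      haveI : IsFiniteMeasure (volume.restrict (Ioc (t n) x)) :=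
        ⟨by rw [Measure.restrict_apply_univ]; exact measure_Ioc_lt_top⟩
      exact (hw'.restrict _).integrable one_le_two
    set G : ℕ → ℝ → ℂ := fun n k =>
      ∫ y in Ioc (t n) x, Complex.exp (2 * Complex.I * k * ((x:ℂ) - (y:ℂ))) * w' y with hG0
    have hGc : ∀ n, Continuous (G n) := by
      intro n
      refine continuous_setIntegral_exp_mul _ (hw'Ioc n)
        (fun k y => Complex.exp (2 * Complex.I * k * ((x:ℂ) - (y:ℂ)))) (fun y => by fun_prop)
        (fun k => Continuous.aestronglyMeasurable (by fun_prop)) (fun k y =>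
          le_of_eq (norm_exp_im _ (re_aux x k y)))
    set A : ℝ → ℂ := fun k =>
      ∫ y in Set.Iic x, Complex.exp (2 * Complex.I * k * ((x:ℂ) - (y:ℂ))) * w y with hA0
    have hAc : Continuous A := by
      refine continuous_setIntegral_exp_mul _ hInt
        (fun k y => Complex.exp (2 * Complex.I * k * ((x:ℂ) - (y:ℂ)))) (fun y => by fun_prop)
        (fun k => Continuous.aestronglyMeasurable (by fun_prop)) (fun k y =>
          le_of_eq (norm_exp_im _ (re_aux x k y)))
    have hFc : Continuous fun k : ℝ => 2 * Complex.I * k * A k + w x :=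
      ((by fun_prop : Continuous fun k : ℝ => 2 * Complex.I * (k:ℂ)).mul hAc).add continuous_const
    -- integration by parts identity
    have hkey : ∀ (k : ℝ) (n : ℕ), 2 * Complex.I * k * A k + w x
        = G n k + Complex.exp (2 * Complex.I * k * ((x:ℂ) - (t n))) * w (t n)
          + 2 * Complex.I * k * ∫ y in Iic (t n),
              Complex.exp (2 * Complex.I * k * ((x:ℂ) - (y:ℂ))) * w y := by
      intro k n
      have hu : ∀ y : ℝ, HasDerivAt (fun z : ℝ => Complex.exp (2 * Complex.I * k * ((x:ℂ) - z)) * w z)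
          (Complex.exp (2 * Complex.I * k * ((x:ℂ) - (y:ℂ))) * w' y
            - 2 * Complex.I * k * (Complex.exp (2 * Complex.I * k * ((x:ℂ) - (y:ℂ))) * w y)) y := by
        intro y
        have hid : HasDerivAt (fun z : ℝ => ((z:ℂ))) 1 y := by
          simpa using (hasDerivAt_id y).ofReal_comp
        have h1 : HasDerivAt (fun z : ℝ => 2 * Complex.I * k * ((x:ℂ) - z))
            (-(2 * Complex.I * k)) y := by
          have h1a := (hid.const_sub ((x:ℂ))).const_mul (2 * Complex.I * (k:ℂ))
          exact h1a.congr_deriv (by ring)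
        have h3 := h1.cexp.mul (hderiv y)
        exact h3.congr_deriv (by ring)
      have hi1 : IntegrableOn
          (fun y : ℝ => Complex.exp (2 * Complex.I * k * ((x:ℂ) - (y:ℂ))) * w' y) (Ioc (t n) x) volume := by
        refine (hw'Ioc n).bdd_mul (c := 1) (Continuous.aestronglyMeasurable (by fun_prop)) (ae_of_all _ fun y => ?_)
        exact le_of_eq (norm_exp_im _ (re_aux x k y))
      have hi2 := hIntExp k
      have hi2a : IntegrableOn
          (fun y : ℝ => Complex.exp (2 * Complex.I * k * ((x:ℂ) - (y:ℂ))) * w y) (Ioc (t n) x) volume :=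
        hi2.mono_set Ioc_subset_Iic_self
      have hi2b : IntegrableOn
          (fun y : ℝ => Complex.exp (2 * Complex.I * k * ((x:ℂ) - (y:ℂ))) * w y) (Iic (t n)) volume :=
        hi2.mono_set (Iic_subset_Iic.2 (hax n).le)
      have hI1 : IntervalIntegrable
          (fun y : ℝ => Complex.exp (2 * Complex.I * k * ((x:ℂ) - (y:ℂ))) * w' y) volume (t n) x :=
        (intervalIntegrable_iff_integrableOn_Ioc_of_le (hax n).le).2 hi1
      have hI2 : IntervalIntegrable
          (fun y : ℝ => Complex.exp (2 * Complex.I * k * ((x:ℂ) - (y:ℂ))) * w y) volume (t n) x :=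
        (intervalIntegrable_iff_integrableOn_Ioc_of_le (hax n).le).2 hi2a
      have hftc := intervalIntegral.integral_eq_sub_of_hasDerivAt (f' := fun y =>
          Complex.exp (2 * Complex.I * k * ((x:ℂ) - (y:ℂ))) * w' y
            - 2 * Complex.I * k * (Complex.exp (2 * Complex.I * k * ((x:ℂ) - (y:ℂ))) * w y))
        (fun y _ => hu y) (hI1.sub (hI2.const_mul (2 * Complex.I * (k:ℂ))))
      rw [intervalIntegral.integral_sub hI1 (hI2.const_mul _),
        intervalIntegral.integral_const_mul] at hftc
      have hvx : Complex.exp (2 * Complex.I * k * ((x:ℂ) - (x:ℝ))) * w x = w x := by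
        rw [sub_self, mul_zero, Complex.exp_zero, one_mul]
      rw [hvx] at hftc
      rw [intervalIntegral.integral_of_le (hax n).le, intervalIntegral.integral_of_le (hax n).le]
        at hftc
      have hsplit : A k = (∫ y in Iic (t n), Complex.exp (2 * Complex.I * k * ((x:ℂ) - (y:ℂ))) * w y)
          + ∫ y in Ioc (t n) x, Complex.exp (2 * Complex.I * k * ((x:ℂ) - (y:ℂ))) * w y := by
        rw [hA0]
        simp only []
        rw [← Set.Iic_union_Ioc_eq_Iic (hax n).le,
          setIntegral_union (Iic_disjoint_Ioc le_rfl) measurableSet_Ioc hi2b hi2a]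
      rw [hG0]
      simp only []
      linear_combination (2 * Complex.I * (k:ℂ)) * hsplit - hftc
    -- convergence
    have htend : ∀ k : ℝ, Tendsto (fun n => G n k) atTop (nhds (2 * Complex.I * k * A k + w x)) := by
      intro k
      have h1 : Tendsto (fun n => Complex.exp (2 * Complex.I * k * ((x:ℂ) - (t n))) * w (t n))
          atTop (nhds 0) := by
        refine squeeze_zero_norm (fun n => ?_) tendsto_one_div_add_atTop_nhds_zero_nat
        rw [norm_mul, norm_exp_im _ (re_aux x k (t n)), one_mul]
        exact (ht2 n).le
      have h2 : Tendsto (fun n => ∫ y in Iic (t n),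
          Complex.exp (2 * Complex.I * k * ((x:ℂ) - (y:ℂ))) * w y) atTop (nhds 0) := by
        set D : ℕ → ℝ := fun n => ∫ y in Iic (min (-(n:ℝ)) (x - 1)), ‖w y‖ with hD0'
        have hDlim : Tendsto D atTop (nhds 0) := by
          have hbd : ∀ n : ℕ, ∀ᵐ y ∂(volume : Measure ℝ),
              ‖(Iic (min (-(n:ℝ)) (x - 1))).indicator (fun y => ‖w y‖) y‖
                ≤ (Iic x).indicator (fun y => ‖w y‖) y := by
            intro n
            refine ae_of_all _ fun y => ?_
            rw [Real.norm_eq_abs,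
              _root_.abs_of_nonneg (Set.indicator_nonneg (fun y _ => norm_nonneg _) y)]
            refine Set.indicator_le_indicator_of_subset (Iic_subset_Iic.2 ?_)
              (fun y => norm_nonneg _) y
            exact le_trans (min_le_right _ _) (by linarith)
          have hlim : ∀ᵐ y ∂(volume : Measure ℝ), Tendsto
              (fun n : ℕ => (Iic (min (-(n:ℝ)) (x - 1))).indicator (fun y => ‖w y‖) y)
              atTop (nhds 0) := by
            refine ae_of_all _ fun y => ?_
            obtain ⟨N, hN⟩ := exists_nat_gt (-y)
            refine tendsto_const_nhds.congr' ?_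
            rw [Filter.EventuallyEq, eventually_atTop]
            refine ⟨N, fun n hn => ?_⟩
            rw [Set.indicator_of_notMem]
            intro hy
            have hle1 : min (-(n:ℝ)) (x-1) ≤ -(n:ℝ) := min_le_left _ _
            have hle2 : (N:ℝ) ≤ (n:ℝ) := by exact_mod_cast hn
            have := hy.trans hle1
            change y ≤ -(n:ℝ) at this
            linarith
          have hdom := tendsto_integral_of_dominated_convergence
            (F := fun (n : ℕ) (y : ℝ) => (Iic (min (-(n:ℝ)) (x - 1))).indicator
              (fun y => ‖w y‖) y)
            (f := fun _ : ℝ => (0:ℝ)) (bound := (Iic x).indicator fun y => ‖w y‖)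
            (fun n => (hwc.norm.aestronglyMeasurable).indicator measurableSet_Iic)
            (IntegrableOn.integrable_indicator (hInt.norm) measurableSet_Iic)
            hbd hlim
          rw [integral_zero] at hdom
          refine hdom.congr fun n => ?_
          rw [integral_indicator measurableSet_Iic]
        refine squeeze_zero_norm (fun n => ?_) hDlim
        calc ‖∫ y in Iic (t n), Complex.exp (2 * Complex.I * k * ((x:ℂ) - (y:ℂ))) * w y‖
            ≤ ∫ y in Iic (t n), ‖Complex.exp (2 * Complex.I * k * ((x:ℂ) - (y:ℂ))) * w y‖ :=
              norm_integral_le_integral_norm _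
          _ = ∫ y in Iic (t n), ‖w y‖ := by
              refine integral_congr_ae (ae_of_all _ fun y => ?_)
              simp only [norm_mul, norm_exp_im _ (re_aux x k y), one_mul]
          _ ≤ D n := by
              refine setIntegral_mono_set (IntegrableOn.mono_set (hInt.norm) (Iic_subset_Iic.2 ?_))
                (ae_of_all _ fun y => norm_nonneg _)
                (HasSubset.Subset.eventuallyLE (Iic_subset_Iic.2 (ht1 n)))
              exact le_trans (min_le_right _ _) (by linarith)
      have h3 := (tendsto_const_nhds (x := 2 * Complex.I * (k:ℂ) * A k + w x) (f := atTop)).sub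
        (h1.add (h2.const_mul (2 * Complex.I * (k:ℂ))))
      have h4 : Tendsto (fun n => G n k) atTop
          (nhds (2 * Complex.I * (k:ℂ) * A k + w x - (0 + 2 * Complex.I * (k:ℂ) * 0))) := by
        refine h3.congr fun n => ?_
        show 2 * Complex.I * (k:ℂ) * A k + w x
            - (Complex.exp (2 * Complex.I * k * ((x:ℂ) - (t n))) * w (t n)
              + 2 * Complex.I * (k:ℂ) * ∫ y in Iic (t n),
                  Complex.exp (2 * Complex.I * k * ((x:ℂ) - y)) * w y) = G n k
        linear_combination hkey k n
      simpa using h4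
    -- Fatou
    have hGm : ∀ n, Measurable fun k => (‖G n k‖₊ : ℝ≥0∞) ^ 2 := fun n =>
      (measurable_coe_nnreal_ennreal.comp (hGc n).nnnorm.measurable).pow_const 2
    have hmain : (∫⁻ k : ℝ, (‖2 * Complex.I * k * A k + w x‖₊ : ℝ≥0∞) ^ 2)
        ≤ ENNReal.ofReal (Real.pi * B) := by
      have hliminf : ∀ k : ℝ, (‖2 * Complex.I * k * A k + w x‖₊ : ℝ≥0∞) ^ 2
          = Filter.liminf (fun n => (‖G n k‖₊ : ℝ≥0∞) ^ 2) atTop := by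
        intro k
        have ht' : Tendsto (fun n => (‖G n k‖₊ : ℝ≥0∞) ^ 2) atTop
            (nhds ((‖2 * Complex.I * k * A k + w x‖₊ : ℝ≥0∞) ^ 2)) := by
          simp only [← ENNReal.coe_pow]
          exact ENNReal.tendsto_coe.2 (((htend k).nnnorm).pow 2)
        exact ht'.liminf_eq.symm
      calc (∫⁻ k : ℝ, (‖2 * Complex.I * k * A k + w x‖₊ : ℝ≥0∞) ^ 2)
          = ∫⁻ k : ℝ, Filter.liminf (fun n => (‖G n k‖₊ : ℝ≥0∞) ^ 2) atTop :=
            lintegral_congr hliminf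
        _ ≤ Filter.liminf (fun n => ∫⁻ k : ℝ, (‖G n k‖₊ : ℝ≥0∞) ^ 2) atTop :=
            lintegral_liminf_le hGm
        _ ≤ ENNReal.ofReal (Real.pi * B) := by
            refine liminf_le_of_frequently_le (Frequently.of_forall fun n => ?_)
            have hA2 := lintegral_sq_fourier (t n) (x - t n) (by linarith [hax n]) w' hw'm
              (hw'.restrict _)
            rw [show t n + (x - t n) = x from by ring] at hA2
            have heq : ∀ k : ℝ, (‖G n k‖₊ : ℝ≥0∞) ^ 2
                = (‖∫ y in Ioc (t n) x, Complex.exp (-(2 * Complex.I * k * (y:ℂ))) * w' y‖₊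
                  : ℝ≥0∞) ^ 2 := by
              intro k
              have hsplit : G n k = Complex.exp (2 * Complex.I * k * (x:ℂ))
                  * ∫ y in Ioc (t n) x, Complex.exp (-(2 * Complex.I * k * (y:ℂ))) * w' y := by
                rw [← integral_const_mul, hG0]
                simp only []
                refine setIntegral_congr_fun measurableSet_Ioc fun y _ => ?_
                rw [← mul_assoc, ← Complex.exp_add]
                congr 2
                ring
              have hnorm1 : ‖Complex.exp (2 * Complex.I * (k:ℂ) * (x:ℂ))‖ = 1 :=
                norm_exp_im _ (re_aux3 k x)
              have hnormeq : ‖G n k‖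
                  = ‖∫ y in Ioc (t n) x, Complex.exp (-(2 * Complex.I * k * (y:ℂ))) * w' y‖ := by
                rw [hsplit, norm_mul, hnorm1, one_mul]
              rw [← enorm_eq_nnnorm, ← enorm_eq_nnnorm, ← ofReal_norm, ← ofReal_norm, hnormeq]
            rw [lintegral_congr heq, hA2]
            refine ENNReal.ofReal_le_ofReal (mul_le_mul_of_nonneg_left ?_ Real.pi_pos.le)
            exact setIntegral_le_integral hw'sq (ae_of_all _ fun y => by positivity)
    -- conclusion
    have hle : (∫ k : ℝ, ‖2 * Complex.I * k * A k + w x‖ ^ 2) ≤ Real.pi * B := by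
      rw [integral_eq_lintegral_of_nonneg_ae
        (f := fun k : ℝ => ‖2 * Complex.I * k * A k + w x‖ ^ 2) (ae_of_all _ fun k => by positivity)
        ((hFc.norm.pow 2).aestronglyMeasurable)]
      have hof : ∀ k : ℝ, ENNReal.ofReal (‖2 * Complex.I * k * A k + w x‖ ^ 2)
          = (‖2 * Complex.I * k * A k + w x‖₊ : ℝ≥0∞) ^ 2 := fun k => by
        rw [ENNReal.ofReal_pow (norm_nonneg _), ofReal_norm, enorm_eq_nnnorm]
      rw [lintegral_congr hof]
      calc (∫⁻ k : ℝ, (‖2 * Complex.I * k * A k + w x‖₊ : ℝ≥0∞) ^ 2).toReal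
          ≤ (ENNReal.ofReal (Real.pi * B)).toReal :=
            ENNReal.toReal_mono ENNReal.ofReal_ne_top hmain
        _ = Real.pi * B := ENNReal.toReal_ofReal (by positivity)
    calc Real.sqrt (∫ k : ℝ, ‖2 * Complex.I * k * A k + w x‖ ^ 2)
        ≤ Real.sqrt (Real.pi * B) := Real.sqrt_le_sqrt hle
      _ = Real.sqrt Real.pi * Real.sqrt B := Real.sqrt_mul Real.pi_pos.le B
end

section
/- Let $q \in L^1(\mathbb{R})$ with $\|q\|_{L^1} < 1$ and $k \in \mathbb{C}^+ \cup \mathbb{R}$ fixed, and $\varphi_-(\cdot;k)$ the unique bounded solution of $\varphi_- = e_1 + K\varphi_-$ for the Volterra operator $K$. Then $\lim_{|k|\to\infty} \varphi_-(x;k) = e_1$ for every $x$, i.e. $\varphi_-^{(2)}(x;k) \to 0$ and $\varphi_-^{(1)}(x;k) \to 1$ as $|k| \to \infty$ in $\overline{\mathbb{C}^+}$. -/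
open MeasureTheory Complex Filter

/-- The Volterra integral operator with complex spectral parameter `k`. -/
noncomputable def KopC (σ : ℝ) (q : ℝ → ℂ) (k : ℂ) (f : ℝ → ℂ × ℂ) : ℝ → ℂ × ℂ :=
  fun x =>
    (∫ y in Set.Iic x, q y * (f y).2,
     ∫ y in Set.Iic x,
       Complex.exp (2 * Complex.I * k * ((x : ℂ) - y)) *
         (-(σ : ℂ) * (starRingEnd ℂ) (q (-y))) * (f y).1)

/-!
Write `φ₋ = (u, v)`. The first row of the equation gives `u = 1 + ∫_{-∞}^x q v`, so
`‖u - 1‖ ≤ ‖q‖₁ sup ‖v‖`. Substituting this into the second row, `v x` is the oscillatory integral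
`∫_{-∞}^x e^{2ik(x-y)} g y dy` of `g y = -σ conj (q (-y))` plus a term of size at most
`‖q‖₁² sup ‖v‖`; as `‖q‖₁ < 1` and `v` is bounded, `sup ‖v‖` is at most the supremum over `x` of
that oscillatory integral divided by `1 - ‖q‖₁²`. For `Im k ≥ 0` the kernel has modulus at most `1`,
and the oscillatory integral tends to `0` uniformly in `x` as `|k| → ∞` (Riemann–Lebesgue):
for smooth compactly supported `g` integration by parts bounds it by `O(1/|k|)`, and a general
`g ∈ L¹` is approximated by such functions.
-/

open Set Topology

noncomputable def oscIntegral (k : ℂ) (g : ℝ → ℂ) (x : ℝ) : ℂ :=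
  ∫ y in Iic x, cexp (2 * I * k * ((x : ℂ) - y)) * g y

section oscIntegral

variable {k : ℂ} {f g : ℝ → ℂ}

lemma norm_cexp_two_mul_I_mul_sub_le_one (hk : 0 ≤ k.im) {x y : ℝ} (hyx : y ≤ x) :
    ‖cexp (2 * I * k * ((x : ℂ) - y))‖ ≤ 1 := by
  rw [Complex.norm_exp, Real.exp_le_one_iff]
  have : (2 * I * k * ((x : ℂ) - y)).re = -(2 * k.im * (x - y)) := by
    simp [Complex.mul_re, Complex.mul_im]
  rw [this, neg_nonpos]
  exact mul_nonneg (by positivity) (sub_nonneg.2 hyx)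

lemma integrableOn_cexp_mul (hk : 0 ≤ k.im) (hg : Integrable g) (x : ℝ) :
    IntegrableOn (fun y : ℝ => cexp (2 * I * k * ((x : ℂ) - y)) * g y) (Iic x) := by
  refine hg.integrableOn.bdd_mul (c := 1) (by fun_prop) ?_
  filter_upwards [ae_restrict_mem measurableSet_Iic] with y hy
  exact norm_cexp_two_mul_I_mul_sub_le_one hk hy

lemma norm_oscIntegral_le (hk : 0 ≤ k.im) (hg : Integrable g) (x : ℝ) :
    ‖oscIntegral k g x‖ ≤ ∫ y, ‖g y‖ := by
  calc ‖oscIntegral k g x‖ ≤ ∫ y in Iic x, ‖g y‖ := by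
        refine norm_integral_le_of_norm_le hg.norm.integrableOn ?_
        filter_upwards [ae_restrict_mem measurableSet_Iic] with y hy
        rw [norm_mul]
        exact mul_le_of_le_one_left (norm_nonneg _) (norm_cexp_two_mul_I_mul_sub_le_one hk hy)
    _ ≤ ∫ y, ‖g y‖ := setIntegral_le_integral hg.norm (.of_forall fun _ => norm_nonneg _)

lemma oscIntegral_sub (hk : 0 ≤ k.im) (hf : Integrable f) (hg : Integrable g) (x : ℝ) :
    oscIntegral k (f - g) x = oscIntegral k f x - oscIntegral k g x := by
  rw [oscIntegral, oscIntegral, oscIntegral,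
    ← integral_sub (integrableOn_cexp_mul hk hf x) (integrableOn_cexp_mul hk hg x)]
  simp only [Pi.sub_apply, mul_sub]

lemma norm_oscIntegral_le_of_contDiff (hk : 0 ≤ k.im) (hk0 : k ≠ 0) (hg : ContDiff ℝ 1 g)
    (hgc : HasCompactSupport g) (x : ℝ) :
    ‖oscIntegral k g x‖ ≤ (‖g x‖ + ∫ y, ‖deriv g y‖) / (2 * ‖k‖) := by
  set c : ℂ := 2 * I * k
  have hc : c ≠ 0 := by simp [c, hk0]
  set e : ℝ → ℂ := fun y => cexp (c * ((x : ℂ) - y))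
  have he : ∀ y, HasDerivAt e (-c * e y) y := by
    intro y
    have : HasDerivAt (fun w : ℂ => cexp (c * ((x : ℂ) - w)))
        (cexp (c * ((x : ℂ) - y)) * (c * (0 - 1))) y :=
      (((hasDerivAt_const _ _).sub (hasDerivAt_id _)).const_mul c).cexp
    convert this.comp_ofReal using 1
    ring
  have hg' : Integrable (deriv g) :=
    (hg.continuous_deriv le_rfl).integrable_of_hasCompactSupport hgc.deriv
  -- integration by parts against the antiderivative `-e / c` of `e`
  have hantideriv : ∀ y,
      HasDerivAt (fun y => -(e y * g y) / c) (e y * g y - e y * deriv g y / c) y := by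
    intro y
    have := ((he y).mul (hg.differentiable one_ne_zero y).hasDerivAt).neg.div_const c
    refine this.congr_deriv ?_
    field_simp
    ring
  have hlim : Tendsto (fun y => -(e y * g y) / c) atBot (𝓝 0) := by
    rw [hasCompactSupport_iff_eventuallyEq, coclosedCompact_eq_cocompact] at hgc
    refine tendsto_const_nhds.congr' ?_
    filter_upwards [hgc.filter_mono atBot_le_cocompact] with y hy
    simp [hy]
  have hint_eg : IntegrableOn (fun y => e y * g y) (Iic x) :=
    integrableOn_cexp_mul hk (hg.continuous.integrable_of_hasCompactSupport hgc) x
  have hint : IntegrableOn (fun y => e y * g y - e y * deriv g y / c) (Iic x) :=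
    hint_eg.sub ((integrableOn_cexp_mul hk hg' x).div_const c)
  have hparts := integral_Iic_of_hasDerivAt_of_tendsto' (fun y _ => hantideriv y) hint hlim
  have hex : e x = 1 := by simp [e]
  rw [integral_sub hint_eg ((integrableOn_cexp_mul hk hg' x).div_const c), integral_div, hex]
    at hparts
  have hrepr : oscIntegral k g x = (oscIntegral k (deriv g) x - g x) / c := by
    change ∫ y in Iic x, e y * g y = ((∫ y in Iic x, e y * deriv g y) - g x) / c
    field_simp at hparts ⊢
    linear_combination hparts
  rw [hrepr, norm_div, show ‖c‖ = 2 * ‖k‖ by simp [c]]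
  gcongr
  calc ‖oscIntegral k (deriv g) x - g x‖ ≤ ‖oscIntegral k (deriv g) x‖ + ‖g x‖ := norm_sub_le _ _
    _ ≤ (∫ y, ‖deriv g y‖) + ‖g x‖ := by grw [norm_oscIntegral_le hk hg' x]
    _ = _ := add_comm _ _

lemma eventually_lt_norm_and_im_nonneg (R : ℝ) :
    ∀ᶠ k : ℂ in comap (fun k : ℂ => ‖k‖) atTop ⊓ 𝓟 {k : ℂ | 0 ≤ k.im}, R < ‖k‖ ∧ 0 ≤ k.im :=
  ((tendsto_comap.eventually (eventually_gt_atTop R)).filter_mono inf_le_left).and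
    ((eventually_principal.2 fun _ hk => hk).filter_mono inf_le_right)

theorem tendstoUniformly_oscIntegral (hg : Integrable g) :
    TendstoUniformly (fun k => oscIntegral k g) 0
      (comap (fun k : ℂ => ‖k‖) atTop ⊓ 𝓟 {k : ℂ | 0 ≤ k.im}) := by
  rw [Metric.tendstoUniformly_iff]
  intro ε hε
  obtain ⟨ψ, hψc, hψ, hgψ⟩ :=
    (memLp_one_iff_integrable.2 hg).exist_eLpNorm_sub_le ENNReal.one_ne_top le_rfl (half_pos hε)
  have hψi : Integrable ψ := hψ.continuous.integrable_of_hasCompactSupport hψc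
  have hgψ' : ∫ y, ‖(g - ψ) y‖ ≤ ε / 2 := by
    rw [integral_norm_eq_lintegral_enorm (hg.sub hψi).aestronglyMeasurable,
      ← eLpNorm_one_eq_lintegral_enorm]
    exact ENNReal.toReal_le_of_le_ofReal (half_pos hε).le hgψ
  obtain ⟨B, hB⟩ := hψ.continuous.bounded_above_of_compact_support hψc
  set D := ∫ y, ‖deriv ψ y‖
  have hBD : 0 ≤ B + D :=
    add_nonneg ((norm_nonneg _).trans (hB 0)) (integral_nonneg fun _ => norm_nonneg _)
  filter_upwards [eventually_lt_norm_and_im_nonneg ((B + D) / ε)] with k ⟨hkR, hk⟩ x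
  have hkpos : 0 < ‖k‖ := (div_nonneg hBD hε.le).trans_lt hkR
  rw [Pi.zero_apply, dist_zero_left]
  calc ‖oscIntegral k g x‖ = ‖oscIntegral k (g - ψ) x + oscIntegral k ψ x‖ := by
        rw [oscIntegral_sub hk hg hψi, sub_add_cancel]
    _ ≤ ‖oscIntegral k (g - ψ) x‖ + ‖oscIntegral k ψ x‖ := norm_add_le _ _
    _ ≤ ε / 2 + (B + D) / (2 * ‖k‖) := by
        gcongr
        · exact (norm_oscIntegral_le hk (hg.sub hψi) x).trans hgψ'
        · exact (norm_oscIntegral_le_of_contDiff hk (norm_pos_iff.1 hkpos)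
            (hψ.of_le (by norm_num)) hψc x).trans (by gcongr; exact hB x)
    _ < ε := by
        rw [div_lt_iff₀ hε] at hkR
        have : (B + D) / (2 * ‖k‖) < ε / 2 := by rw [div_lt_iff₀ (by positivity)]; linarith
        linarith

end oscIntegral

lemma norm_integral_add_le_of_norm_le {α E : Type*} [MeasurableSpace α] {μ : Measure α}
    [NormedAddCommGroup E] [NormedSpace ℝ E] {f h : α → E} {G : α → ℝ}
    (hf : Integrable f μ) (hG : Integrable G μ) (hh : ∀ᵐ a ∂μ, ‖h a‖ ≤ G a) :
    ‖∫ a, f a + h a ∂μ‖ ≤ ‖∫ a, f a ∂μ‖ + ∫ a, G a ∂μ := by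
  by_cases hfh : Integrable (fun a => f a + h a) μ
  · have hh' : Integrable h μ := (hfh.sub hf).congr (.of_forall fun a => by simp)
    rw [integral_add hf hh']
    exact (norm_add_le _ _).trans (add_le_add_right (norm_integral_le_of_norm_le hG hh) _)
  · rw [integral_undef hfh, norm_zero]
    exact add_nonneg (norm_nonneg _)
      (integral_nonneg_of_ae (hh.mono fun a ha => (norm_nonneg _).trans ha))

section Volterra

variable {p g u v : ℝ → ℂ} {k : ℂ} {M : ℝ}

lemma norm_sub_one_le_of_volterra (hp : Integrable p) (hM : ∀ y, ‖v y‖ ≤ M)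
    (hu : ∀ z, u z = 1 + ∫ y in Iic z, p y * v y) (z : ℝ) :
    ‖u z - 1‖ ≤ (∫ y, ‖p y‖) * M := by
  have hM0 : 0 ≤ M := (norm_nonneg _).trans (hM 0)
  rw [hu z, add_sub_cancel_left, ← integral_mul_const]
  calc ‖∫ y in Iic z, p y * v y‖ ≤ ∫ y in Iic z, ‖p y‖ * M :=
        norm_integral_le_of_norm_le (hp.norm.mul_const M).integrableOn
          (.of_forall fun y => by rw [norm_mul]; gcongr; exact hM y)
    _ ≤ ∫ y, ‖p y‖ * M :=
        setIntegral_le_integral (hp.norm.mul_const M) (.of_forall fun y => by positivity)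

lemma norm_le_of_volterra (hk : 0 ≤ k.im) (hp : Integrable p) (hg : Integrable g)
    (hM : ∀ y, ‖v y‖ ≤ M) (hu : ∀ z, u z = 1 + ∫ y in Iic z, p y * v y)
    (hv : ∀ z, v z = ∫ y in Iic z, cexp (2 * I * k * ((z : ℂ) - y)) * g y * u y) (z : ℝ) :
    ‖v z‖ ≤ ‖oscIntegral k g z‖ + (∫ y, ‖g y‖) * ((∫ y, ‖p y‖) * M) := by
  have hM0 : 0 ≤ M := (norm_nonneg _).trans (hM 0)
  set e : ℝ → ℂ := fun y => cexp (2 * I * k * ((z : ℂ) - y))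
  have hsplit : v z = ∫ y in Iic z, e y * g y + e y * g y * (u y - 1) := by
    rw [hv z]
    congr 1 with y
    ring
  have hbound : ∀ᵐ y ∂volume.restrict (Iic z),
      ‖e y * g y * (u y - 1)‖ ≤ ‖g y‖ * ((∫ y, ‖p y‖) * M) := by
    filter_upwards [ae_restrict_mem measurableSet_Iic] with y hy
    rw [norm_mul, norm_mul]
    have := norm_cexp_two_mul_I_mul_sub_le_one hk hy
    have := norm_sub_one_le_of_volterra hp hM hu y
    calc ‖e y‖ * ‖g y‖ * ‖u y - 1‖ ≤ 1 * ‖g y‖ * ((∫ y, ‖p y‖) * M) := by gcongr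
      _ = _ := by ring
  rw [hsplit, ← integral_mul_const]
  refine (norm_integral_add_le_of_norm_le (integrableOn_cexp_mul hk hg z)
    (hg.norm.mul_const _).integrableOn hbound).trans (add_le_add_right ?_ _)
  exact setIntegral_le_integral (hg.norm.mul_const _)
    (.of_forall fun y => mul_nonneg (norm_nonneg _)
      (mul_nonneg (integral_nonneg fun _ => norm_nonneg _) hM0))

theorem norm_le_div_of_volterra (hk : 0 ≤ k.im) (hp : Integrable p) (hg : Integrable g)
    (hpg : (∫ y, ‖p y‖) * (∫ y, ‖g y‖) < 1) (hv_bdd : BddAbove (range fun y => ‖v y‖))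
    (hu : ∀ z, u z = 1 + ∫ y in Iic z, p y * v y)
    (hv : ∀ z, v z = ∫ y in Iic z, cexp (2 * I * k * ((z : ℂ) - y)) * g y * u y)
    {δ : ℝ} (hδ : ∀ z, ‖oscIntegral k g z‖ ≤ δ) (z : ℝ) :
    ‖v z‖ ≤ δ / (1 - (∫ y, ‖p y‖) * (∫ y, ‖g y‖)) := by
  set M := ⨆ y, ‖v y‖
  have hM : ∀ y, ‖v y‖ ≤ M := le_ciSup hv_bdd
  have hMrec : M ≤ δ + (∫ y, ‖g y‖) * ((∫ y, ‖p y‖) * M) :=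
    ciSup_le fun y => (norm_le_of_volterra hk hp hg hM hu hv y).trans (by gcongr; exact hδ y)
  rw [le_div_iff₀ (by linarith)]
  nlinarith [hM z]

theorem dist_le_div_of_volterra (hk : 0 ≤ k.im) (hp : Integrable p) (hg : Integrable g)
    (hp1 : ∫ y, ‖p y‖ ≤ 1) (hpg : (∫ y, ‖p y‖) * (∫ y, ‖g y‖) < 1)
    (hv_bdd : BddAbove (range fun y => ‖v y‖))
    (hu : ∀ z, u z = 1 + ∫ y in Iic z, p y * v y)
    (hv : ∀ z, v z = ∫ y in Iic z, cexp (2 * I * k * ((z : ℂ) - y)) * g y * u y)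
    {δ : ℝ} (hδ : ∀ z, ‖oscIntegral k g z‖ ≤ δ) (z : ℝ) :
    dist (u z, v z) (1, 0) ≤ δ / (1 - (∫ y, ‖p y‖) * (∫ y, ‖g y‖)) := by
  have hv_le := norm_le_div_of_volterra hk hp hg hpg hv_bdd hu hv hδ
  rw [Prod.dist_eq, dist_eq_norm, dist_eq_norm, sub_zero]
  exact max_le ((norm_sub_one_le_of_volterra hp hv_le hu z).trans
    (mul_le_of_le_one_left ((norm_nonneg _).trans (hv_le z)) hp1)) (hv_le z)

end Volterra

lemma integrable_const_mul_conj_comp_neg (c : ℂ) {q : ℝ → ℂ} (hq : Integrable q) :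
    Integrable fun y => c * (starRingEnd ℂ) (q (-y)) :=
  (hq.comp_neg.norm.mono' (continuous_conj.comp_aestronglyMeasurable hq.comp_neg.1)
    (.of_forall fun _ => (RCLike.norm_conj _).le)).const_mul c

lemma integral_norm_const_mul_conj_comp_neg (c : ℂ) (q : ℝ → ℂ) :
    ∫ y, ‖c * (starRingEnd ℂ) (q (-y))‖ = ‖c‖ * ∫ y, ‖q y‖ := by
  simp only [norm_mul, RCLike.norm_conj, integral_const_mul]
  rw [integral_neg_eq_self (fun y => ‖q y‖)]

/-- For the bounded Jost solution `φ₋ = e₁ + K φ₋`, one has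
`φ₋(x;k) → e₁` as `|k| → ∞` in the closed upper half-plane. -/
theorem stmt6 (σ : ℝ) (hσ : σ = 1 ∨ σ = -1) (q : ℝ → ℂ) (hq : Integrable q)
    (hq1 : ∫ y : ℝ, ‖q y‖ < 1)
    (φ : ℂ → ℝ → ℂ × ℂ)
    (hbdd : ∃ C : ℝ, ∀ (k : ℂ) (x : ℝ), 0 ≤ k.im →
      ‖(φ k x).1‖ + ‖(φ k x).2‖ ≤ C)
    (heq : ∀ (k : ℂ), 0 ≤ k.im →
      ∀ x : ℝ, φ k x = ((1 : ℂ), (0 : ℂ)) + KopC σ q k (φ k) x)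
    (x : ℝ) :
    Tendsto (fun k : ℂ => φ k x)
      (Filter.comap (fun k : ℂ => ‖k‖) Filter.atTop ⊓ Filter.principal {k : ℂ | 0 ≤ k.im})
      (nhds ((1 : ℂ), (0 : ℂ))) := by
  obtain ⟨C, hC⟩ := hbdd
  set r := ∫ y, ‖q y‖
  have hr : 0 ≤ r := integral_nonneg fun _ => norm_nonneg _
  set g : ℝ → ℂ := fun y => -(σ : ℂ) * (starRingEnd ℂ) (q (-y))
  have hg := integrable_const_mul_conj_comp_neg (-(σ : ℂ)) hq
  have hgr : ∫ y, ‖g y‖ = r := by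
    rw [integral_norm_const_mul_conj_comp_neg,
      show ‖-(σ : ℂ)‖ = 1 by rcases hσ with rfl | rfl <;> simp, one_mul]
  rw [Metric.tendsto_nhds]
  intro ε hε
  have hr2 : 0 < 1 - r * r := by nlinarith
  filter_upwards [Metric.tendstoUniformly_iff.1 (tendstoUniformly_oscIntegral hg)
    (ε * (1 - r * r) / 2) (by positivity), eventually_lt_norm_and_im_nonneg 0]
    with k hkδ hk
  replace hk := hk.2
  have hu : ∀ z, (φ k z).1 = 1 + ∫ y in Iic z, q y * (φ k y).2 := fun z => by
    rw [heq k hk z]; rfl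
  have hv : ∀ z, (φ k z).2 = ∫ y in Iic z, cexp (2 * I * k * ((z : ℂ) - y)) * g y * (φ k y).1 :=
    fun z => by rw [heq k hk z]; exact zero_add _
  have hv_bdd : BddAbove (range fun y => ‖(φ k y).2‖) :=
    ⟨C, by rintro _ ⟨y, rfl⟩; exact (le_add_of_nonneg_left (norm_nonneg _)).trans (hC k y hk)⟩
  calc dist (φ k x) (1, 0) ≤ ε * (1 - r * r) / 2 / (1 - r * r) := by
        have := dist_le_div_of_volterra hk hq hg hq1.le (by rw [hgr]; nlinarith)
          hv_bdd hu hv (fun z => by simpa using (hkδ z).le) x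
        rwa [hgr] at this
    _ < ε := by rw [div_right_comm, mul_div_cancel_right₀ _ hr2.ne']; linarith
end
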